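/- arXiv:2605.08505 — 2 statements merged into one kernel-verified Lean document; each statement's English description precedes it below -/
import Mathlib

section
/- Subcritical vanishing of individual weights: if β_n n^{−α} → 0 as n → ∞ (with α = 2/(d−1)), then for every fixed integer i ≥ 1, A_{(i)} → 0 in probability. -/
/-!
Every ordered weight is at most `max_j A_j ≤ 1 / Z_n`, so it suffices that `Z_n → ∞` in
probability. Put `u_n = min (1 / β_n) t₀`; each token with `T_j ≤ u_n` contributes at least `e⁻¹`
to `Z_n`. The cap `{T ≤ u}` has `ρ dσ`-mass at least `c u^{(d-1)/2}` (a box of side lengths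
`1 × √u × ⋯ × √u` fits in the cone over it, and `ρ ≥ ρ(q) / 2` near `q`), and the subcritical
hypothesis says exactly that `n u_n^{(d-1)/2} → ∞`. Cut the first `n` tokens into `M` blocks of
`⌊n / M⌋` tokens: by independence a block misses the cap with probability at most
`exp (-⌊n / M⌋ c u_n^{(d-1)/2}) → 0`, and if no block misses, `Z_n ≥ M / e`, so every weight is
at most `e / M`.
-/

open MeasureTheory ProbabilityTheory Real Filter Topology
open scoped RealInnerProductSpace ENNReal

noncomputable section

namespace AttnScaling

/-- ambient Euclidean space `ℝ^d` -/
abbrev Euc (d : ℕ) := EuclideanSpace ℝ (Fin d)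

/-- The surface measure on the unit sphere `S^{d-1} ⊆ ℝ^d`, viewed as a measure on the
ambient space (the pushforward of `volume.toSphere` along the inclusion). -/
def surfaceMeasure (d : ℕ) : Measure (Euc d) :=
  Measure.map Subtype.val ((volume : Measure (Euc d)).toSphere)

/-- Surface area of the unit sphere `S^{m-1} ⊆ ℝ^m`. -/
def sphereArea (m : ℕ) : ℝ :=
  (((volume : Measure (Euc m)).toSphere) Set.univ).toReal

/-- The law `ρ dσ` of a single token on the sphere. -/
def tokenLaw (d : ℕ) (ρ : Euc d → ℝ) : Measure (Euc d) :=
  (surfaceMeasure d).withDensity fun y => ENNReal.ofReal (ρ y)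

/-- The tokens `x 0, x 1, …` are i.i.d. with common law `ρ dσ` on the unit sphere. -/
def IsIIDTokens (d : ℕ) {Ω : Type*} [MeasurableSpace Ω] (P : Measure Ω)
    (ρ : Euc d → ℝ) (x : ℕ → Ω → Euc d) : Prop :=
  (∀ i, Measurable (x i)) ∧ (∀ i ω, ‖x i ω‖ = 1) ∧
    (∀ i, Measure.map (x i) P = tokenLaw d ρ) ∧
    iIndepFun x P

/-- the exponent `α = 2/(d-1)` -/
def alpha (d : ℕ) : ℝ := 2 / ((d : ℝ) - 1)

/-- the constant `C(q) = 2^{1/α} σ_{d-2} ρ(q) / (d-1)` -/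
def Cq (d : ℕ) (ρ : Euc d → ℝ) (q : Euc d) : ℝ :=
  (2 : ℝ) ^ (1 / alpha d) * sphereArea (d - 1) * ρ q / ((d : ℝ) - 1)

variable {Ω : Type*} [MeasurableSpace Ω]

/-- distance-to-query `T_i = 1 - ⟨q, x_i⟩` -/
def dtq (d : ℕ) (q : Euc d) (x : ℕ → Ω → Euc d) (i : ℕ) (ω : Ω) : ℝ :=
  1 - ⟪q, x i ω⟫

/-- the softmax partition function `Z_n = ∑_{j=1}^n e^{-β_n T_j}` -/
def zfun (d : ℕ) (β : ℕ → ℝ) (q : Euc d) (x : ℕ → Ω → Euc d) (n : ℕ) (ω : Ω) : ℝ :=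
  ∑ j ∈ Finset.range n, Real.exp (-(β n * dtq d q x j ω))

/-- the attention weight `A_i = e^{-β_n T_i} / Z_n` -/
def attn (d : ℕ) (β : ℕ → ℝ) (q : Euc d) (x : ℕ → Ω → Euc d) (n i : ℕ) (ω : Ω) : ℝ :=
  Real.exp (-(β n * dtq d q x i ω)) / zfun d β q x n ω

/-- `ordDesc w k` is the `k`-th largest entry (1-indexed) of the tuple `w`, `0` if `k-1 ≥ n`. -/
def ordDesc {n : ℕ} (w : Fin n → ℝ) (k : ℕ) : ℝ :=
  if h : k - 1 < n then (w ∘ Tuple.sort w) (Fin.rev ⟨k - 1, h⟩) else 0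

/-- `attnOrd d β q x n k` is the `k`-th largest attention weight `A_{(k)}` (1-indexed)
among the weights `A_1, …, A_n`. -/
def attnOrd (d : ℕ) (β : ℕ → ℝ) (q : Euc d) (x : ℕ → Ω → Euc d) (n k : ℕ) (ω : Ω) : ℝ :=
  ordDesc (fun i : Fin n => attn d β q x n i ω) k

/-- `Measure.toSphere` assigns to a set `d` times the volume of the cone `(0, 1) • S` over it. -/
lemma natCast_mul_volume_le_surfaceMeasure {d : ℕ} {S K : Set (Euc d)} (hS : MeasurableSet S)
    (hK : ∀ v ∈ K, 0 < ‖v‖ ∧ ‖v‖ < 1 ∧ ‖v‖⁻¹ • v ∈ S) :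
    d * volume K ≤ surfaceMeasure d S := by
  rw [surfaceMeasure, Measure.map_apply measurable_subtype_coe hS,
    Measure.toSphere_apply' _ (measurable_subtype_coe hS), finrank_euclideanSpace_fin]
  refine mul_le_mul_right (measure_mono fun v hv => ?_) _
  obtain ⟨hv0, hv1, hvS⟩ := hK v hv
  refine Set.mem_smul.2 ⟨‖v‖, ⟨hv0, hv1⟩, ‖v‖⁻¹ • v, ⟨⟨‖v‖⁻¹ • v, ?_⟩, hvS, rfl⟩, ?_⟩
  · rw [mem_sphere_zero_iff_norm, norm_smul, norm_inv, norm_norm, inv_mul_cancel₀ hv0.ne']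
  · rw [smul_smul, mul_inv_cancel₀ hv0.ne', one_smul]

lemma OrthonormalBasis.exists_apply_eq {ι E : Type*} [Fintype ι] [NormedAddCommGroup E]
    [InnerProductSpace ℝ E] [FiniteDimensional ℝ E] (hcard : Module.finrank ℝ E = Fintype.card ι)
    (i : ι) {q : E} (hq : ‖q‖ = 1) : ∃ b : OrthonormalBasis ι ℝ E, b i = q := by
  have hon : Orthonormal ℝ (Set.domRestrict {i} fun _ : ι => q) :=
    ⟨fun _ => hq, fun j k hjk => absurd (Subtype.ext (j.2.trans k.2.symm)) hjk⟩
  obtain ⟨b, hb⟩ := hon.exists_orthonormalBasis_extension_of_card_eq hcard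
  exact ⟨b, hb i rfl⟩

lemma cone_of_repr_mem_pi {d : ℕ} {b : OrthonormalBasis (Fin (d + 1)) ℝ (Euc (d + 1))}
    {t δ : ℝ} (ht1 : t ≤ 1) (hδ : d * δ ^ 2 ≤ t / 4) {v : Euc (d + 1)}
    (hv : ∀ i, b.repr v i ∈
      (Fin.cons (Set.Icc (1 / 2) (3 / 5)) fun _ => Set.Icc (-δ) δ : Fin (d + 1) → Set ℝ) i) :
    0 < ‖v‖ ∧ ‖v‖ < 1 ∧ ‖v‖⁻¹ • v ∈ {y : Euc (d + 1) | 1 - ⟪b 0, y⟫ ≤ t} := by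
  have hnorm : ‖v‖ ^ 2 = b.repr v 0 ^ 2 + ∑ i : Fin d, b.repr v i.succ ^ 2 := by
    rw [← b.repr.norm_map, EuclideanSpace.real_norm_sq_eq, Fin.sum_univ_succ]
  have hrest : ∑ i : Fin d, b.repr v i.succ ^ 2 ≤ t / 4 := calc
    _ ≤ ∑ _i : Fin d, δ ^ 2 := Finset.sum_le_sum fun i _ => sq_le_sq' (hv i.succ).1 (hv i.succ).2
    _ ≤ t / 4 := by simpa using hδ
  obtain ⟨hs1, hs2⟩ : b.repr v 0 ∈ Set.Icc (1 / 2 : ℝ) (3 / 5) := by simpa using hv 0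
  set s := b.repr v 0
  set w := ∑ i : Fin d, b.repr v i.succ ^ 2
  have hw : 0 ≤ w := by positivity
  have ht : 0 ≤ t := by linarith
  have hv0 : 0 < ‖v‖ := by nlinarith [norm_nonneg v]
  refine ⟨hv0, by nlinarith [norm_nonneg v], ?_⟩
  have hsq : ((1 - t) * ‖v‖) ^ 2 ≤ s ^ 2 := calc
    ((1 - t) * ‖v‖) ^ 2 = (1 - t) ^ 2 * (s ^ 2 + w) := by rw [mul_pow, hnorm]
    _ ≤ (1 - t) * (s ^ 2 + w) := by gcongr; nlinarith
    _ ≤ s ^ 2 := by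
      nlinarith [mul_nonneg ht hw, mul_le_mul_of_nonneg_left (show 1 / 4 ≤ s ^ 2 by nlinarith) ht]
  rw [Set.mem_ofPred_eq, real_inner_smul_right, ← b.repr_apply_apply, ← div_eq_inv_mul,
    sub_le_comm, le_div_iff₀ hv0]
  exact (pow_le_pow_iff_left₀ (by nlinarith) (by linarith) two_ne_zero).1 hsq

lemma surfaceMeasure_cap_ge {d : ℕ} (hd : 0 < d) {q : Euc d} (hq : ‖q‖ = 1) :
    ∃ c > 0, ∀ t : ℝ, 0 < t → t ≤ 1 →
      ENNReal.ofReal (c * t ^ (((d : ℝ) - 1) / 2)) ≤ surfaceMeasure d {y | 1 - ⟪q, y⟫ ≤ t} := by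
  obtain ⟨d, rfl⟩ : ∃ d', d = d' + 1 := ⟨d - 1, by omega⟩
  obtain ⟨b, hb⟩ := OrthonormalBasis.exists_apply_eq (by simp) (0 : Fin (d + 1)) hq
  refine ⟨(d + 1) / 10 / √(d + 1) ^ d, by positivity, fun t ht ht1 => ?_⟩
  set δ := √t / (2 * √(d + 1))
  set I : Fin (d + 1) → Set ℝ := Fin.cons (Set.Icc (1 / 2) (3 / 5)) fun _ => Set.Icc (-δ) δ
  set K : Set (Euc (d + 1)) := (WithLp.ofLp ∘ b.repr) ⁻¹' Set.univ.pi I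
  have hK : volume K = ENNReal.ofReal (1 / 10) * ENNReal.ofReal (2 * δ) ^ d := by
    rw [((PiLp.volume_preserving_ofLp _).comp b.measurePreserving_repr).measure_preimage
      (MeasurableSet.univ_pi fun i => ?_).nullMeasurableSet, volume_pi_pi, Fin.prod_univ_succ]
    · simp only [I, Fin.cons_zero, Fin.cons_succ, Real.volume_Icc, Finset.prod_const,
        Finset.card_univ, Fintype.card_fin]
      rw [sub_neg_eq_add, ← two_mul]
      norm_num
    · cases i using Fin.cases <;> exact measurableSet_Icc
  have hδ : d * δ ^ 2 ≤ t / 4 := by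
    rw [div_pow, mul_pow, Real.sq_sqrt ht.le, Real.sq_sqrt (by positivity), mul_div_assoc']
    rw [div_le_div_iff₀ (by positivity) (by norm_num)]
    nlinarith
  calc ENNReal.ofReal ((d + 1) / 10 / √(d + 1) ^ d * t ^ ((((d + 1 : ℕ) : ℝ) - 1) / 2))
      = (d + 1 : ℕ) * volume K := by
        have h2δ : 2 * δ = √t / √(d + 1) := by simp only [δ]; field_simp
        have hsqrt : √t ^ d = t ^ ((((d + 1 : ℕ) : ℝ) - 1) / 2) := by
          rw [Real.sqrt_eq_rpow, ← Real.rpow_natCast, ← Real.rpow_mul ht.le]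
          push_cast
          ring_nf
        rw [hK, ← ENNReal.ofReal_natCast, ← ENNReal.ofReal_pow (by positivity),
          ← ENNReal.ofReal_mul (by norm_num), ← ENNReal.ofReal_mul (by positivity), h2δ, div_pow,
          ← hsqrt]
        push_cast
        ring_nf
    _ ≤ _ := natCast_mul_volume_le_surfaceMeasure
        (measurableSet_le (by fun_prop) measurable_const) fun v hv =>
          hb ▸ cone_of_repr_mem_pi ht1 hδ fun i => hv i (Set.mem_univ i)

lemma ae_mem_sphere_surfaceMeasure (d : ℕ) : ∀ᵐ y ∂surfaceMeasure d, y ∈ Metric.sphere 0 1 :=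
  (ae_map_iff measurable_subtype_coe.aemeasurable Metric.isClosed_sphere.measurableSet).2
    (ae_of_all _ Subtype.prop)

lemma tokenLaw_cap_ge {d : ℕ} (hd : 0 < d) {q : Euc d} (hq : ‖q‖ = 1) {ρ : Euc d → ℝ}
    (hρ : Continuous ρ) (hρq : 0 < ρ q) :
    ∃ c > 0, ∃ t₀ > 0, ∀ t : ℝ, 0 < t → t ≤ t₀ →
      ENNReal.ofReal (c * t ^ (((d : ℝ) - 1) / 2)) ≤ tokenLaw d ρ {y | 1 - ⟪q, y⟫ ≤ t} := by
  obtain ⟨c, hc, hcap⟩ := surfaceMeasure_cap_ge hd hq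
  obtain ⟨r, hr, hball⟩ := Metric.continuousAt_iff.1 hρ.continuousAt (ρ q / 2) (half_pos hρq)
  refine ⟨ρ q / 2 * c, by positivity, min 1 (r ^ 2 / 4), by positivity, fun t ht htt₀ => ?_⟩
  have hcapm : MeasurableSet {y : Euc d | 1 - ⟪q, y⟫ ≤ t} :=
    measurableSet_le (by fun_prop) measurable_const
  have hdens : ∀ᵐ y ∂surfaceMeasure d, y ∈ {y : Euc d | 1 - ⟪q, y⟫ ≤ t} →
      ENNReal.ofReal (ρ q / 2) ≤ ENNReal.ofReal (ρ y) := by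
    filter_upwards [ae_mem_sphere_surfaceMeasure d] with y hy hyt
    have hdist : dist y q < r := by
      have hsq : dist y q ^ 2 = 2 * (1 - ⟪q, y⟫) := by
        rw [dist_eq_norm, norm_sub_sq_real, mem_sphere_zero_iff_norm.1 hy, hq, real_inner_comm]
        ring
      have := min_le_right _ _ |>.trans' htt₀
      nlinarith [dist_nonneg (x := y) (y := q), show 1 - ⟪q, y⟫ ≤ t from hyt]
    have := abs_lt.1 (hball hdist)
    exact ENNReal.ofReal_le_ofReal (by linarith)
  calc ENNReal.ofReal (ρ q / 2 * c * t ^ (((d : ℝ) - 1) / 2))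
      = ENNReal.ofReal (ρ q / 2) * ENNReal.ofReal (c * t ^ (((d : ℝ) - 1) / 2)) := by
        rw [← ENNReal.ofReal_mul (by positivity), mul_assoc]
    _ ≤ ENNReal.ofReal (ρ q / 2) * surfaceMeasure d {y | 1 - ⟪q, y⟫ ≤ t} :=
        mul_le_mul_right (hcap t ht (htt₀.trans (min_le_left _ _))) _
    _ = ∫⁻ _ in {y | 1 - ⟪q, y⟫ ≤ t}, ENNReal.ofReal (ρ q / 2) ∂surfaceMeasure d :=
        (setLIntegral_const _ _).symm
    _ ≤ ∫⁻ y in {y | 1 - ⟪q, y⟫ ≤ t}, ENNReal.ofReal (ρ y) ∂surfaceMeasure d :=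
        setLIntegral_mono_ae' hcapm hdens
    _ = tokenLaw d ρ {y | 1 - ⟪q, y⟫ ≤ t} := (withDensity_apply _ hcapm).symm

lemma abs_ordDesc_le {n : ℕ} {w : Fin n → ℝ} {B : ℝ} (hB : 0 ≤ B) (hw : ∀ j, |w j| ≤ B)
    (k : ℕ) : |ordDesc w k| ≤ B := by
  unfold ordDesc
  split_ifs
  · exact hw _
  · simpa using hB

lemma le_card_of_forall_exists_mem_Ico {s : Finset ℕ} {M L : ℕ}
    (h : ∀ b < M, ∃ j ∈ Finset.Ico (b * L) ((b + 1) * L), j ∈ s) : M ≤ s.card :=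
  calc M = (Finset.range M).card := (Finset.card_range M).symm
    _ ≤ (s.image (· / L)).card := Finset.card_le_card fun b hb => by
        obtain ⟨j, hj, hjs⟩ := h b (Finset.mem_range.1 hb)
        rw [Finset.mem_Ico] at hj
        exact Finset.mem_image.2 ⟨j, hjs, Nat.div_eq_of_lt_le hj.1 hj.2⟩
    _ ≤ s.card := Finset.card_image_le

lemma measure_biInter_preimage_compl_le {ι α : Type*} [MeasurableSpace α] {P : Measure Ω}
    [IsProbabilityMeasure P] {μ : Measure α} {X : ι → Ω → α} (hX : ∀ i, Measurable (X i))
    (hlaw : ∀ i, P.map (X i) = μ) (hind : iIndepFun X P) {S : Set α} (hS : MeasurableSet S)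
    {p : ℝ} (hp : ENNReal.ofReal p ≤ μ S) (J : Finset ι) :
    P (⋂ i ∈ J, X i ⁻¹' Sᶜ) ≤ ENNReal.ofReal (exp (-(J.card * p))) := by
  have hfactor : ∀ i, P (X i ⁻¹' Sᶜ) ≤ ENNReal.ofReal (exp (-p)) := fun i => by
    have : IsProbabilityMeasure μ := hlaw i ▸ Measure.isProbabilityMeasure_map (hX i).aemeasurable
    rw [← Measure.map_apply (hX i) hS.compl, hlaw i, prob_compl_eq_one_sub hS]
    calc 1 - μ S ≤ 1 - ENNReal.ofReal p := tsub_le_tsub_left hp _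
      _ ≤ ENNReal.ofReal (1 - p) :=
          tsub_le_iff_right.2 (by simpa using ENNReal.ofReal_add_le (p := 1 - p) (q := p))
      _ ≤ ENNReal.ofReal (exp (-p)) :=
          ENNReal.ofReal_le_ofReal (by linarith [add_one_le_exp (-p)])
  calc P (⋂ i ∈ J, X i ⁻¹' Sᶜ) = ∏ i ∈ J, P (X i ⁻¹' Sᶜ) :=
        hind.measure_inter_preimage_eq_mul J fun _ _ => hS.compl
    _ ≤ ∏ _i ∈ J, ENNReal.ofReal (exp (-p)) := Finset.prod_le_prod' fun i _ => hfactor i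
    _ = ENNReal.ofReal (exp (-(J.card * p))) := by
        rw [Finset.prod_const, ← ENNReal.ofReal_pow (exp_pos _).le, ← exp_nat_mul, mul_neg]

section Attention

variable {α : Type*} {d : ℕ} {q : Euc d} {x : ℕ → α → Euc d} {β : ℕ → ℝ} {n : ℕ} {u : ℝ}

lemma dtq_nonneg (hq : ‖q‖ ≤ 1) (hx : ∀ j ω, ‖x j ω‖ ≤ 1) (j : ℕ) (ω : α) :
    0 ≤ dtq d q x j ω := by
  have := (real_inner_le_norm q (x j ω)).trans
    (mul_le_one₀ hq (norm_nonneg _) (hx j ω))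
  rw [dtq]
  linarith

lemma card_mul_exp_neg_one_le_zfun (hβ : 0 ≤ β n) (hu : β n * u ≤ 1) (ω : α) :
    ((Finset.range n).filter fun j => dtq d q x j ω ≤ u).card * exp (-1) ≤
      zfun d β q x n ω := by
  rw [← nsmul_eq_mul, ← Finset.sum_const]
  calc _ ≤ ∑ j ∈ (Finset.range n).filter (fun j => dtq d q x j ω ≤ u),
        exp (-(β n * dtq d q x j ω)) :=
        Finset.sum_le_sum fun j hj => exp_le_exp.2 <| neg_le_neg <|
          (mul_le_mul_of_nonneg_left (Finset.mem_filter.1 hj).2 hβ).trans hu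
    _ ≤ zfun d β q x n ω := Finset.sum_le_sum_of_subset_of_nonneg (Finset.filter_subset _ _)
        fun _ _ _ => (exp_pos _).le

lemma abs_attn_le_exp_one_div (hq : ‖q‖ ≤ 1) (hx : ∀ j ω, ‖x j ω‖ ≤ 1) (hβ : 0 ≤ β n)
    (hu : β n * u ≤ 1) {M : ℕ} (hM : 0 < M) {ω : α}
    (hcard : M ≤ ((Finset.range n).filter fun j => dtq d q x j ω ≤ u).card) (j : ℕ) :
    |attn d β q x n j ω| ≤ exp 1 / M := by
  have hZ : M * exp (-1) ≤ zfun d β q x n ω :=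
    (mul_le_mul_of_nonneg_right (Nat.cast_le.2 hcard) (exp_pos _).le).trans
      (card_mul_exp_neg_one_le_zfun hβ hu ω)
  have hnum : exp (-(β n * dtq d q x j ω)) ≤ 1 :=
    exp_le_one_iff.2 (neg_nonpos.2 (mul_nonneg hβ (dtq_nonneg hq hx j ω)))
  rw [attn, abs_of_nonneg (div_nonneg (exp_pos _).le
    ((by positivity : (0 : ℝ) ≤ M * exp (-1)).trans hZ))]
  calc _ ≤ 1 / (M * exp (-1)) := div_le_div₀ zero_le_one hnum (by positivity) hZ
    _ = exp 1 / M := by rw [exp_neg]; field_simp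

end Attention

lemma measure_le_dist_attnOrd_le {d : ℕ} {q : Euc d} (hq : ‖q‖ = 1) {ρ : Euc d → ℝ}
    {P : Measure Ω} [IsProbabilityMeasure P] {x : ℕ → Ω → Euc d} (hx : IsIIDTokens d P ρ x)
    {β : ℕ → ℝ} {n : ℕ} (hβ : 0 ≤ β n) {u p : ℝ} (hu : β n * u ≤ 1)
    (hp : ENNReal.ofReal p ≤ tokenLaw d ρ {y | 1 - ⟪q, y⟫ ≤ u}) {M : ℕ} (hM : 0 < M) {ε : ℝ}
    (hε : exp 1 / M < ε) (i : ℕ) :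
    P {ω | ε ≤ dist (attnOrd d β q x n i ω) 0} ≤
      M * ENNReal.ofReal (exp (-((n / M : ℕ) * p))) := by
  obtain ⟨hxm, hx1, hxlaw, hxind⟩ := hx
  set L := n / M
  set cap := {y : Euc d | 1 - ⟪q, y⟫ ≤ u}
  have hcap : MeasurableSet cap := measurableSet_le (by fun_prop) measurable_const
  have hsub : {ω | ε ≤ dist (attnOrd d β q x n i ω) 0} ⊆
      ⋃ b ∈ Finset.range M, ⋂ j ∈ Finset.Ico (b * L) ((b + 1) * L), x j ⁻¹' capᶜ := by
    intro ω hω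
    by_contra hmiss
    simp only [Set.mem_iUnion, Set.mem_iInter, Set.mem_preimage, Set.mem_compl_iff,
      not_exists, not_forall, not_not] at hmiss
    have hcard : M ≤ ((Finset.range n).filter fun j => dtq d q x j ω ≤ u).card :=
      le_card_of_forall_exists_mem_Ico fun b hb => by
        obtain ⟨j, hj, hjcap⟩ := hmiss b (Finset.mem_range.2 hb)
        have hjn : j < n := (Finset.mem_Ico.1 hj).2.trans_le <|
          (Nat.mul_le_mul_right L hb).trans (Nat.mul_div_le n M)
        exact ⟨j, hj, Finset.mem_filter.2 ⟨Finset.mem_range.2 hjn, hjcap⟩⟩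
    have : |attnOrd d β q x n i ω| ≤ exp 1 / M := abs_ordDesc_le (by positivity)
      (fun j : Fin n => abs_attn_le_exp_one_div hq.le (fun j ω => (hx1 j ω).le) hβ hu hM hcard j) i
    rw [Set.mem_ofPred_eq, dist_zero_right, norm_eq_abs] at hω
    exact (hω.trans this).not_gt hε
  calc P {ω | ε ≤ dist (attnOrd d β q x n i ω) 0}
      ≤ ∑ b ∈ Finset.range M, P (⋂ j ∈ Finset.Ico (b * L) ((b + 1) * L), x j ⁻¹' capᶜ) :=
        (measure_mono hsub).trans (measure_biUnion_finset_le _ _)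
    _ ≤ ∑ _b ∈ Finset.range M, ENNReal.ofReal (exp (-(L * p))) := Finset.sum_le_sum fun b _ => by
        simpa [Nat.card_Ico, add_mul] using measure_biInter_preimage_compl_le hxm hxlaw hxind hcap
          hp (Finset.Ico (b * L) ((b + 1) * L))
    _ = M * ENNReal.ofReal (exp (-(L * p))) := by
        rw [Finset.sum_const, Finset.card_range, nsmul_eq_mul]

lemma tendsto_natCast_mul_min_rpow_atTop {β : ℕ → ℝ} (hβ : ∀ n, 0 < β n) {κ : ℝ} (hκ : 0 < κ)
    (hsub : Tendsto (fun n : ℕ => β n * (n : ℝ) ^ (-κ⁻¹)) atTop (𝓝 0)) {t₀ : ℝ} (ht₀ : 0 < t₀) :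
    Tendsto (fun n : ℕ => (n : ℝ) * min (1 / β n) t₀ ^ κ) atTop atTop := by
  have hpos : ∀ᶠ n : ℕ in atTop, 0 < β n * (n : ℝ) ^ (-κ⁻¹) := by
    filter_upwards [eventually_gt_atTop 0] with n hn
    exact mul_pos (hβ n) (rpow_pos_of_pos (Nat.cast_pos.2 hn) _)
  have h₁ : Tendsto (fun n : ℕ => (n : ℝ) * (1 / β n) ^ κ) atTop atTop := by
    refine ((tendsto_rpow_atTop hκ).comp (tendsto_inv_nhdsGT_zero.comp
      (tendsto_nhdsWithin_iff.2 ⟨hsub, hpos⟩))).congr' ?_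
    filter_upwards [eventually_gt_atTop 0] with n hn
    have hn : (0 : ℝ) < n := Nat.cast_pos.2 hn
    rw [Function.comp_apply, Function.comp_apply, mul_inv, rpow_neg hn.le, inv_inv,
      mul_rpow (inv_nonneg.2 (hβ n).le) (by positivity), ← rpow_mul hn.le,
      inv_mul_cancel₀ hκ.ne', rpow_one, one_div, mul_comm]
  have h₂ : Tendsto (fun n : ℕ => (n : ℝ) * t₀ ^ κ) atTop atTop :=
    tendsto_natCast_atTop_atTop.atTop_mul_const (rpow_pos_of_pos ht₀ _)
  refine tendsto_atTop.2 fun K => ?_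
  filter_upwards [tendsto_atTop.1 h₁ K, tendsto_atTop.1 h₂ K] with n hn₁ hn₂
  rcases min_cases (1 / β n) t₀ with ⟨h, -⟩ | ⟨h, -⟩ <;> rw [h] <;> assumption

lemma tendsto_natCast_div_mul_atTop {g : ℕ → ℝ} (hg : ∀ n, 0 ≤ g n)
    (h : Tendsto (fun n : ℕ => (n : ℝ) * g n) atTop atTop) {M : ℕ} (hM : 0 < M) :
    Tendsto (fun n : ℕ => ((n / M : ℕ) : ℝ) * g n) atTop atTop := by
  refine tendsto_atTop_mono' _ ?_ (h.const_mul_atTop (by positivity : (0 : ℝ) < (2 * (M : ℝ))⁻¹))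
  filter_upwards [eventually_ge_atTop M] with n hn
  have hn' : (n : ℝ) ≤ 2 * M * (n / M : ℕ) := by
    have h₁ := Nat.lt_div_mul_add (a := n) hM
    have h₂ := (Nat.one_le_div_iff hM).2 hn
    exact_mod_cast show n ≤ 2 * M * (n / M) by nlinarith
  calc (2 * M : ℝ)⁻¹ * (n * g n) ≤ (2 * M : ℝ)⁻¹ * (2 * M * (n / M : ℕ) * g n) := by
        gcongr
        exact hg n
    _ = ((n / M : ℕ) : ℝ) * g n := by field_simp

theorem subcritical_attention_weights_vanish_general
    {d : ℕ} (hd : 2 ≤ d) {q : Euc d} (hq : ‖q‖ = 1)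
    {ρ : Euc d → ℝ} (hρC2 : ContDiff ℝ 2 ρ) (hρq : 0 < ρ q)
    (P : Measure Ω) [IsProbabilityMeasure P]
    {x : ℕ → Ω → Euc d} (hx : IsIIDTokens d P ρ x)
    {β : ℕ → ℝ} (hβpos : ∀ n, 0 < β n)
    (hsub : Tendsto (fun n : ℕ => β n * (n : ℝ) ^ (-(alpha d))) atTop (𝓝 0)) :
    ∀ i : ℕ, 1 ≤ i →
      TendstoInMeasure P (fun n ω => attnOrd d β q x n i ω) atTop (fun _ => 0) := by
  intro i _
  obtain ⟨c, hc, t₀, ht₀, hcap⟩ := tokenLaw_cap_ge (by omega) hq hρC2.continuous hρq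
  set κ : ℝ := ((d : ℝ) - 1) / 2
  have hκ : 0 < κ := by
    have : (2 : ℝ) ≤ d := by exact_mod_cast hd
    simp only [κ]
    linarith
  set u : ℕ → ℝ := fun n => min (1 / β n) t₀
  have hu : ∀ n, 0 < u n := fun n => lt_min (one_div_pos.2 (hβpos n)) ht₀
  have hβu : ∀ n, β n * u n ≤ 1 := fun n =>
    (mul_le_mul_of_nonneg_left (min_le_left _ _) (hβpos n).le).trans_eq
      (mul_one_div_cancel (hβpos n).ne')
  have hgrowth : Tendsto (fun n : ℕ => (n : ℝ) * (c * u n ^ κ)) atTop atTop := by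
    simpa only [mul_left_comm] using (tendsto_natCast_mul_min_rpow_atTop hβpos hκ
      (by rwa [alpha, ← inv_div] at hsub) ht₀).const_mul_atTop hc
  rw [tendstoInMeasure_iff_dist]
  intro ε hε
  obtain ⟨M, hM⟩ := exists_nat_gt (exp 1 / ε)
  have hM₀ : 0 < M := Nat.cast_pos.1 ((div_pos (exp_pos 1) hε).trans hM)
  have hMε : exp 1 / M < ε := by rwa [div_lt_comm₀ (Nat.cast_pos.2 hM₀) hε]
  have hbound : Tendsto (fun n : ℕ => (M : ℝ≥0∞) *
      ENNReal.ofReal (exp (-((n / M : ℕ) * (c * u n ^ κ))))) atTop (𝓝 0) := by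
    have hexp := tendsto_natCast_div_mul_atTop
      (fun n => mul_nonneg hc.le (rpow_nonneg (hu n).le _)) hgrowth hM₀
    simpa using ENNReal.Tendsto.const_mul (ENNReal.tendsto_ofReal
      (tendsto_exp_atBot.comp (tendsto_neg_atBot_iff.2 hexp))) (Or.inr (ENNReal.natCast_ne_top M))
  refine tendsto_of_tendsto_of_tendsto_of_le_of_le tendsto_const_nhds hbound (fun _ => bot_le)
    fun n => measure_le_dist_attnOrd_le hq hx (hβpos n).le (hβu n)
      (hcap _ (hu n) (min_le_right _ _)) hM₀ hMε i

/-- **Subcritical vanishing of individual weights.** If `β_n n^{-α} → 0` as `n → ∞`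
(with `α = 2/(d-1)`), then for every fixed `i ≥ 1`, `A_{(i)} → 0` in probability. -/
theorem subcritical_attention_weights_vanish
    {d : ℕ} (hd : 2 ≤ d) {q : Euc d} (hq : ‖q‖ = 1)
    {ρ : Euc d → ℝ} (hρC2 : ContDiff ℝ 2 ρ) (hρnn : ∀ y, 0 ≤ ρ y) (hρq : 0 < ρ q)
    (P : Measure Ω) [IsProbabilityMeasure P]
    {x : ℕ → Ω → Euc d} (hx : IsIIDTokens d P ρ x)
    {β : ℕ → ℝ} (hβpos : ∀ n, 0 < β n)
    (hsub : Tendsto (fun n : ℕ => β n * (n : ℝ) ^ (-(alpha d))) atTop (𝓝 0)) :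
    ∀ i : ℕ, 1 ≤ i →
      TendstoInMeasure P (fun n ω => attnOrd d β q x n i ω) atTop (fun _ => 0) :=
  subcritical_attention_weights_vanish_general hd hq hρC2 hρq P hx hβpos hsub

end AttnScaling
end
end

section
/- Quantile asymptotics for the distance-to-query: let F^{−1}(u) := inf{t ≥ 0 : F(t) ≥ u} be the generalized inverse of F. Then, as u → 0⁺, F^{−1}(u) = (u/C(q))^α · (1 + o(1)); that is, F^{−1}(u) / (u/C(q))^α → 1 as u → 0⁺. -/
/-!
The cone `(0,1) • {x ∈ S^{d-1} : 1 - ⟪q, x⟫ ≤ t}` over a cap is squeezed between two truncated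
circular cones with axis `q` and slope `c = √(t(2-t))/(1-t)`, whose volumes
`c^{d-1} a^d ω_{d-1}/d` follow by slicing orthogonally to `q`. Since `σ(A) = d · vol((0,1) • A)`,
the cap of height `t` has area `~ ω_{d-1} (2t)^{(d-1)/2} = σ_{d-2} (2t)^{1/α}/(d-1)`. Continuity
of `ρ` at `q` upgrades this to `F(t) ~ C(q) t^{1/α}`, and inverting a monotone function with a
power asymptotic inverts the asymptotic: `F⁻¹(u) ~ (u/C(q))^α`.
-/

open MeasureTheory ProbabilityTheory Real Filter Topology
open scoped RealInnerProductSpace ENNReal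

noncomputable section

namespace AttnScaling

variable {Ω : Type*} [MeasurableSpace Ω]

open Set Metric Asymptotics
open scoped Pointwise

def lowerQuantile (F : ℝ → ℝ) (u : ℝ) : ℝ := sInf {t : ℝ | 0 ≤ t ∧ u ≤ F t}

lemma _root_.Asymptotics.IsEquivalent.eventually_const_mul_le {ι : Type*} {l : Filter ι}
    {f g : ι → ℝ} (h : f ~[l] g) (hg : ∀ᶠ x in l, 0 ≤ g x) {a : ℝ} (ha : a < 1) :
    ∀ᶠ x in l, a * g x ≤ f x := by
  obtain ⟨φ, hφ, hfg⟩ := h.exists_eq_mul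
  filter_upwards [hφ.eventually_const_lt ha, hg, hfg] with x hφx hgx hfx
  rw [hfx]
  exact mul_le_mul_of_nonneg_right hφx.le hgx

lemma _root_.Asymptotics.IsEquivalent.eventually_le_const_mul {ι : Type*} {l : Filter ι}
    {f g : ι → ℝ} (h : f ~[l] g) (hg : ∀ᶠ x in l, 0 ≤ g x) {b : ℝ} (hb : 1 < b) :
    ∀ᶠ x in l, f x ≤ b * g x := by
  obtain ⟨φ, hφ, hfg⟩ := h.exists_eq_mul
  filter_upwards [hφ.eventually_lt_const hb, hg, hfg] with x hφx hgx hfx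
  rw [hfx]
  exact mul_le_mul_of_nonneg_right hφx.le hgx

section Quantile

variable {F : ℝ → ℝ}

lemma lowerQuantile_le {u t : ℝ} (ht : 0 ≤ t) (hu : u ≤ F t) : lowerQuantile F u ≤ t :=
  csInf_le ⟨0, fun _ hs => hs.1⟩ ⟨ht, hu⟩

lemma le_lowerQuantile (hF : Monotone F) {u t : ℝ} (hne : ∃ s, 0 ≤ s ∧ u ≤ F s)
    (hlt : ∀ s ∈ Ioo 0 t, F s < u) : t ≤ lowerQuantile F u := by
  refine le_csInf hne fun s ⟨hs0, hsu⟩ => not_lt.1 fun hst => ?_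
  have hmid : (s + t) / 2 ∈ Ioo 0 t := ⟨by linarith, by linarith⟩
  exact (hsu.trans (hF (by linarith : s ≤ (s + t) / 2))).not_gt (hlt _ hmid)

lemma eventually_lowerQuantile_mem_Icc (hF : Monotone F) {α A B : ℝ} (hα : 0 < α)
    (hA : 0 < A) (hB : 0 < B)
    (hlow : ∀ᶠ t in 𝓝[>] 0, A * t ^ α⁻¹ ≤ F t) (hup : ∀ᶠ t in 𝓝[>] 0, F t ≤ B * t ^ α⁻¹) :
    ∀ᶠ u in 𝓝[>] 0, (u / B) ^ α ≤ lowerQuantile F u ∧ lowerQuantile F u ≤ (u / A) ^ α := by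
  obtain ⟨δ, hδ, hbounds⟩ : ∃ δ > 0, ∀ t ∈ Ioo 0 δ, A * t ^ α⁻¹ ≤ F t ∧ F t ≤ B * t ^ α⁻¹ :=
    (nhdsGT_basis 0).eventually_iff.1 (hlow.and hup)
  have hsmall : ∀ D > 0, ∀ᶠ u in 𝓝[>] (0 : ℝ), (u / D) ^ α < δ := fun D _ => by
    have : Tendsto (fun u : ℝ => (u / D) ^ α) (𝓝 0) (𝓝 ((0 / D) ^ α)) :=
      ((continuous_id.div_const D).rpow_const fun _ => Or.inr hα.le).tendsto 0
    rw [zero_div, zero_rpow hα.ne'] at this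
    exact (this.mono_left nhdsWithin_le_nhds).eventually_lt_const hδ
  filter_upwards [hsmall A hA, hsmall B hB, self_mem_nhdsWithin] with u hAδ hBδ (hu : 0 < u)
  have hinv : ∀ D > 0, D * ((u / D) ^ α) ^ α⁻¹ = u := fun D hD => by
    rw [rpow_rpow_inv (div_pos hu hD).le hα.ne', mul_div_cancel₀ _ hD.ne']
  have hApos : 0 < (u / A) ^ α := rpow_pos_of_pos (div_pos hu hA) α
  have hFA : u ≤ F ((u / A) ^ α) := (hinv A hA).symm.le.trans (hbounds _ ⟨hApos, hAδ⟩).1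
  refine ⟨le_lowerQuantile hF ⟨_, hApos.le, hFA⟩ fun s hs => ?_, lowerQuantile_le hApos.le hFA⟩
  calc F s ≤ B * s ^ α⁻¹ := (hbounds s ⟨hs.1, hs.2.trans hBδ⟩).2
    _ < B * ((u / B) ^ α) ^ α⁻¹ :=
      mul_lt_mul_of_pos_left (rpow_lt_rpow hs.1.le hs.2 (inv_pos.2 hα)) hB
    _ = u := hinv B hB

lemma isEquivalent_lowerQuantile (hF : Monotone F) {α C : ℝ} (hα : 0 < α)
    (hC : 0 < C) (h : F ~[𝓝[>] 0] fun t => C * t ^ α⁻¹) :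
    lowerQuantile F ~[𝓝[>] 0] fun u => (u / C) ^ α := by
  have hg : ∀ᶠ t in 𝓝[>] (0 : ℝ), 0 ≤ C * t ^ α⁻¹ :=
    eventually_nhdsWithin_of_forall fun t (ht : 0 < t) => by positivity
  have hratio : ∀ r ∈ Ioo (0 : ℝ) 1, ∀ᶠ u in 𝓝[>] 0,
      r ≤ lowerQuantile F u / (u / C) ^ α ∧ lowerQuantile F u / (u / C) ^ α ≤ r⁻¹ := by
    rintro r ⟨hr0, hr1⟩
    set c := r ^ α⁻¹
    have hc0 : 0 < c := rpow_pos_of_pos hr0 _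
    have hc1 : c < 1 := rpow_lt_one hr0.le hr1 (inv_pos.2 hα)
    have hcα : c ^ α = r := rpow_inv_rpow hr0.le hα.ne'
    have hlow : ∀ᶠ t in 𝓝[>] 0, C * c * t ^ α⁻¹ ≤ F t := by
      filter_upwards [h.eventually_const_mul_le hg hc1] with t ht
      linarith
    have hup : ∀ᶠ t in 𝓝[>] 0, F t ≤ C / c * t ^ α⁻¹ := by
      filter_upwards [h.eventually_le_const_mul hg ((one_lt_inv₀ hc0).2 hc1)] with t ht
      rwa [div_eq_mul_inv, mul_comm C, mul_assoc]
    filter_upwards [eventually_lowerQuantile_mem_Icc hF hα (by positivity) (by positivity) hlow hup,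
      self_mem_nhdsWithin] with u ⟨hQlow, hQup⟩ (hu : 0 < u)
    have hpos : 0 < (u / C) ^ α := by positivity
    rw [div_div_eq_mul_div, mul_div_right_comm, mul_rpow (by positivity) hc0.le, hcα] at hQlow
    rw [← div_div, div_rpow (by positivity) hc0.le, hcα] at hQup
    constructor
    · rw [le_div_iff₀ hpos]; linarith
    · rw [div_le_iff₀ hpos, inv_mul_eq_div]; exact hQup
  refine isEquivalent_of_tendsto_one (tendsto_order.2 ⟨fun a ha => ?_, fun b hb => ?_⟩)
  · obtain ⟨r, hra, hr1⟩ := exists_between (max_lt ha one_pos)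
    filter_upwards [hratio r ⟨(le_max_right _ _).trans_lt hra, hr1⟩] with u hu
    exact (le_max_left _ _).trans_lt (hra.trans_le hu.1)
  · obtain ⟨r, hrb, hr1⟩ := exists_between (inv_lt_one_of_one_lt₀ hb)
    filter_upwards [hratio r ⟨(inv_pos.2 (one_pos.trans hb)).trans hrb, hr1⟩] with u hu
    exact hu.2.trans_lt ((inv_lt_comm₀ ((inv_pos.2 (one_pos.trans hb)).trans hrb)
      (one_pos.trans hb)).2 hrb)

end Quantile

lemma isEquivalent_setLIntegral_ofReal {X ι : Type*} [TopologicalSpace X] [MeasurableSpace X]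
    {μ : Measure X} {f : X → ℝ} {x₀ : X} (hf : ContinuousAt f x₀) (hf₀ : 0 < f x₀)
    {l : Filter ι} {s : ι → Set X} (hs : Tendsto s l (𝓝 x₀).smallSets)
    (hsm : ∀ i, MeasurableSet (s i)) (hμs : ∀ i, μ (s i) ≠ ∞) :
    (fun i => (∫⁻ x in s i, ENNReal.ofReal (f x) ∂μ).toReal) ~[l]
      fun i => f x₀ * μ.real (s i) := by
  refine IsLittleO.of_bound fun c hc => ?_
  have hnear : ∀ᶠ x in 𝓝 x₀, f x ∈ Icc (f x₀ - c * f x₀) (f x₀ + c * f x₀) :=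
    hf.eventually (Icc_mem_nhds (by nlinarith) (by nlinarith))
  filter_upwards [tendsto_smallSets_iff.1 hs _ hnear] with i hsub
  have hconst : ∀ a : ℝ, ∫⁻ _ in s i, ENNReal.ofReal a ∂μ = ENNReal.ofReal (a * μ.real (s i)) :=
    fun a => by
      rw [setLIntegral_const, ENNReal.ofReal_mul' measureReal_nonneg, measureReal_def,
        ENNReal.ofReal_toReal (hμs i)]
  have hup : ∫⁻ x in s i, ENNReal.ofReal (f x) ∂μ
      ≤ ENNReal.ofReal ((f x₀ + c * f x₀) * μ.real (s i)) :=
    (hconst _).symm ▸ setLIntegral_mono' (hsm i) fun x hx => ENNReal.ofReal_le_ofReal (hsub hx).2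
  have hlow : ENNReal.ofReal ((f x₀ - c * f x₀) * μ.real (s i))
      ≤ ∫⁻ x in s i, ENNReal.ofReal (f x) ∂μ :=
    (hconst _).symm ▸ setLIntegral_mono' (hsm i) fun x hx => ENNReal.ofReal_le_ofReal (hsub hx).1
  have hup' := ENNReal.toReal_le_of_le_ofReal (by positivity) hup
  have hlow' :=
    (ENNReal.ofReal_le_iff_le_toReal (ne_top_of_le_ne_top ENNReal.ofReal_ne_top hup)).1 hlow
  have hm := measureReal_nonneg (μ := μ) (s := s i)
  rw [Pi.sub_apply, Real.norm_eq_abs, Real.norm_eq_abs, abs_of_nonneg (mul_nonneg hf₀.le hm),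
    abs_sub_le_iff]
  constructor <;> nlinarith

lemma measurableSet_prod_cone {E : Type*} [NormedAddCommGroup E] [MeasurableSpace E]
    [OpensMeasurableSpace E] (a c : ℝ) :
    MeasurableSet {p : ℝ × E | 0 < p.1 ∧ p.1 < a ∧ ‖p.2‖ ≤ c * p.1} :=
  (measurableSet_lt measurable_const measurable_fst).inter
    ((measurableSet_lt measurable_fst measurable_const).inter
      (measurableSet_le measurable_snd.norm (measurable_fst.const_mul c)))

lemma volume_prod_cone {E : Type*} [NormedAddCommGroup E] [NormedSpace ℝ E] [MeasurableSpace E]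
    [BorelSpace E] [FiniteDimensional ℝ E] (μ : Measure E) [μ.IsAddHaarMeasure] {a c : ℝ}
    (ha : 0 ≤ a) (hc : 0 ≤ c) :
    ((volume : Measure ℝ).prod μ) {p : ℝ × E | 0 < p.1 ∧ p.1 < a ∧ ‖p.2‖ ≤ c * p.1} =
      ENNReal.ofReal (c ^ Module.finrank ℝ E * a ^ (Module.finrank ℝ E + 1) /
        (Module.finrank ℝ E + 1)) * μ (ball 0 1) := by
  set k := Module.finrank ℝ E
  have hmeas := measurableSet_prod_cone (E := E) a c
  have hslice : ∀ s : ℝ, μ (Prod.mk s ⁻¹' {p : ℝ × E | 0 < p.1 ∧ p.1 < a ∧ ‖p.2‖ ≤ c * p.1}) =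
      (Ioo 0 a).indicator (fun s => ENNReal.ofReal ((c * s) ^ k) * μ (ball 0 1)) s := by
    intro s
    by_cases hs : s ∈ Ioo 0 a
    · have : Prod.mk s ⁻¹' {p : ℝ × E | 0 < p.1 ∧ p.1 < a ∧ ‖p.2‖ ≤ c * p.1} =
          closedBall 0 (c * s) := by
        ext z
        simp [hs.1, hs.2]
      rw [indicator_of_mem hs, this, μ.addHaar_closedBall _ (mul_nonneg hc hs.1.le)]
    · have : Prod.mk s ⁻¹' {p : ℝ × E | 0 < p.1 ∧ p.1 < a ∧ ‖p.2‖ ≤ c * p.1} = ∅ :=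
        eq_empty_of_forall_notMem fun z hz => hs ⟨hz.1, hz.2.1⟩
      rw [indicator_of_notMem hs, this, measure_empty]
  have hint : ∫ s in Ioo 0 a, (c * s) ^ k = c ^ k * a ^ (k + 1) / (k + 1) := by
    rw [integral_Ioc_eq_integral_Ioo.symm, ← intervalIntegral.integral_of_le ha]
    simp_rw [mul_pow]
    rw [intervalIntegral.integral_const_mul, integral_pow]
    ring
  rw [Measure.prod_apply hmeas]
  simp_rw [hslice]
  rw [lintegral_indicator measurableSet_Ioo, lintegral_mul_const _ (by fun_prop), ← hint,
    ofReal_integral_eq_lintegral_ofReal]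
  · exact ((continuous_const.mul continuous_id).pow k).integrableOn_Icc.mono_set
      Ioo_subset_Icc_self
  · filter_upwards [ae_restrict_mem measurableSet_Ioo] with s hs
    exact pow_nonneg (mul_nonneg hc hs.1.le) k

lemma exists_orthonormalBasis_apply_zero_eq {n : ℕ} {q : Euc (n + 1)} (hq : ‖q‖ = 1) :
    ∃ b : OrthonormalBasis (Fin (n + 1)) ℝ (Euc (n + 1)), b 0 = q := by
  have hq₁ : Orthonormal ℝ (({0} : Set (Fin (n + 1))).domRestrict fun _ => q) := by
    rw [orthonormal_iff_ite]
    intro i j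
    rw [Subsingleton.elim i j, if_pos rfl]
    simp [hq]
  obtain ⟨b, hb⟩ := hq₁.exists_orthonormalBasis_extension_of_card_eq (by simp)
  exact ⟨b, hb 0 rfl⟩

lemma exists_measurePreserving_axial {n : ℕ} {q : Euc (n + 1)} (hq : ‖q‖ = 1) :
    ∃ Φ : Euc (n + 1) → ℝ × Euc n, MeasurePreserving Φ ∧
      ∀ y, (Φ y).1 = ⟪q, y⟫ ∧ ‖y‖ ^ 2 = (Φ y).1 ^ 2 + ‖(Φ y).2‖ ^ 2 := by
  obtain ⟨b, hb⟩ := exists_orthonormalBasis_apply_zero_eq hq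
  have hsplit : MeasurePreserving
      (Prod.map id (MeasurableEquiv.toLp 2 (Fin n → ℝ)) ∘
        MeasurableEquiv.piFinSuccAbove (fun _ : Fin (n + 1) => ℝ) 0 ∘
          (MeasurableEquiv.toLp 2 (Fin (n + 1) → ℝ)).symm) := by
    refine MeasurePreserving.comp ?_ ((volume_preserving_piFinSuccAbove _ 0).comp
      (EuclideanSpace.volume_preserving_symm_measurableEquiv_toLp _))
    rw [Measure.volume_eq_prod, Measure.volume_eq_prod]
    exact (MeasurePreserving.id _).prod
      (EuclideanSpace.volume_preserving_symm_measurableEquiv_toLp (Fin n)).symm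
  refine ⟨_, hsplit.comp b.measurePreserving_repr, fun y => ⟨?_, ?_⟩⟩
  · simp [b.repr_apply_apply, hb]
  · rw [← b.repr.norm_map y, EuclideanSpace.norm_sq_eq, Fin.sum_univ_succ]
    simp [EuclideanSpace.norm_sq_eq, Fin.tail]

lemma volume_axialCone {n : ℕ} {q : Euc (n + 1)} (hq : ‖q‖ = 1) {a c : ℝ} (ha : 0 ≤ a)
    (hc : 0 ≤ c) :
    volume {y : Euc (n + 1) | 0 < ⟪q, y⟫ ∧ ⟪q, y⟫ < a ∧ ‖y‖ ^ 2 ≤ (1 + c ^ 2) * ⟪q, y⟫ ^ 2} =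
      ENNReal.ofReal (c ^ n * a ^ (n + 1) / (n + 1)) * volume (ball (0 : Euc n) 1) := by
  obtain ⟨Φ, hΦ, hΦq⟩ := exists_measurePreserving_axial hq
  have hpre : {y : Euc (n + 1) | 0 < ⟪q, y⟫ ∧ ⟪q, y⟫ < a ∧ ‖y‖ ^ 2 ≤ (1 + c ^ 2) * ⟪q, y⟫ ^ 2} =
      Φ ⁻¹' {p : ℝ × Euc n | 0 < p.1 ∧ p.1 < a ∧ ‖p.2‖ ≤ c * p.1} := by
    ext y
    obtain ⟨h1, h2⟩ := hΦq y
    simp only [mem_ofPred_eq, mem_preimage, ← h1, h2, and_congr_right_iff]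
    intro hs _
    rw [← pow_le_pow_iff_left₀ (norm_nonneg _) (mul_nonneg hc hs.le) two_ne_zero]
    constructor <;> intro h <;> nlinarith
  rw [hpre, hΦ.measure_preimage (measurableSet_prod_cone a c).nullMeasurableSet,
    Measure.volume_eq_prod, volume_prod_cone volume ha hc, finrank_euclideanSpace_fin]

section SphereCap

variable {E : Type*} [NormedAddCommGroup E] [InnerProductSpace ℝ E]

def sphereCap (q : E) (t : ℝ) : Set (sphere (0 : E) 1) := {x | 1 - ⟪q, (x : E)⟫ ≤ t}

lemma measurableSet_sphereCap [MeasurableSpace E] [OpensMeasurableSpace E] (q : E) (t : ℝ) :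
    MeasurableSet (sphereCap q t) :=
  measurable_subtype_coe (t := {y : E | 1 - ⟪q, y⟫ ≤ t})
    (measurableSet_le (by fun_prop) measurable_const)

lemma Ioo_smul_sphereCap (q : E) (t : ℝ) :
    Ioo (0 : ℝ) 1 • ((↑) '' sphereCap q t : Set E) =
      {y | 0 < ‖y‖ ∧ ‖y‖ < 1 ∧ (1 - t) * ‖y‖ ≤ ⟪q, y⟫} := by
  ext y
  constructor
  · rintro ⟨r, hr, _, ⟨x, hx, rfl⟩, rfl⟩
    have hx1 : ‖(x : E)‖ = 1 := mem_sphere_zero_iff_norm.1 x.2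
    have hxq : 1 - t ≤ ⟪q, (x : E)⟫ := by simp only [sphereCap, mem_ofPred_eq] at hx; linarith
    simp only [mem_ofPred_eq, norm_smul, hx1, Real.norm_eq_abs, abs_of_pos hr.1, mul_one,
      real_inner_smul_right]
    exact ⟨hr.1, hr.2, by nlinarith [hr.1]⟩
  · rintro ⟨h0, h1, h2⟩
    refine ⟨‖y‖, ⟨h0, h1⟩, ‖y‖⁻¹ • y, ⟨⟨‖y‖⁻¹ • y, ?_⟩, ?_, rfl⟩, ?_⟩
    · exact mem_sphere_zero_iff_norm.2 (norm_smul_inv_norm (norm_pos_iff.1 h0))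
    · simp only [sphereCap, mem_ofPred_eq, real_inner_smul_right]
      rw [inv_mul_eq_div, sub_le_comm, le_div_iff₀ h0]
      linarith
    · simp [smul_smul, mul_inv_cancel₀ h0.ne']

/-- `(1 + c²) r² = 1` says that `r ‖y‖ ≤ ⟪q, y⟫` and `‖y‖² ≤ (1 + c²) ⟪q, y⟫²` describe the same
cone over the half-space `⟪q, y⟫ > 0`. -/
lemma cone_subset_axialCone {q : E} (hq : ‖q‖ = 1) {r c : ℝ} (hr : 0 < r)
    (hrc : (1 + c ^ 2) * r ^ 2 = 1) :
    {y : E | 0 < ‖y‖ ∧ ‖y‖ < 1 ∧ r * ‖y‖ ≤ ⟪q, y⟫} ⊆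
      {y | 0 < ⟪q, y⟫ ∧ ⟪q, y⟫ < 1 ∧ ‖y‖ ^ 2 ≤ (1 + c ^ 2) * ⟪q, y⟫ ^ 2} := by
  rintro y ⟨h0, h1, h2⟩
  have hcs : ⟪q, y⟫ ≤ ‖y‖ := by simpa [hq] using real_inner_le_norm q y
  have hqy : 0 < ⟪q, y⟫ := (mul_pos hr h0).trans_le h2
  refine ⟨hqy, hcs.trans_lt h1, ?_⟩
  have hsq : (r * ‖y‖) ^ 2 ≤ ⟪q, y⟫ ^ 2 := pow_le_pow_left₀ (by positivity) h2 2
  nlinarith [sq_nonneg c]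

lemma axialCone_subset_cone {q : E} (hq : ‖q‖ = 1) {r c : ℝ} (hr : 0 < r)
    (hrc : (1 + c ^ 2) * r ^ 2 = 1) :
    {y : E | 0 < ⟪q, y⟫ ∧ ⟪q, y⟫ < r ∧ ‖y‖ ^ 2 ≤ (1 + c ^ 2) * ⟪q, y⟫ ^ 2} ⊆
      {y | 0 < ‖y‖ ∧ ‖y‖ < 1 ∧ r * ‖y‖ ≤ ⟪q, y⟫} := by
  rintro y ⟨h0, h1, h2⟩
  have hcs : ⟪q, y⟫ ≤ ‖y‖ := by simpa [hq] using real_inner_le_norm q y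
  have hsq : (r * ‖y‖) ^ 2 ≤ ⟪q, y⟫ ^ 2 := by nlinarith [sq_nonneg r]
  have hry : r * ‖y‖ ≤ ⟪q, y⟫ := (pow_le_pow_iff_left₀ (by positivity) h0.le two_ne_zero).1 hsq
  refine ⟨h0.trans_le hcs, ?_, hry⟩
  nlinarith

lemma tendsto_sphereCap_smallSets {q : E} (hq : q ∈ sphere (0 : E) 1) :
    Tendsto (sphereCap q) (𝓝[>] 0) (𝓝 (⟨q, hq⟩ : sphere (0 : E) 1)).smallSets := by
  refine tendsto_smallSets_iff.2 fun U hU => ?_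
  obtain ⟨ε, hε, hball⟩ := Metric.mem_nhds_iff.1 hU
  filter_upwards [Ioo_mem_nhdsGT (by positivity : (0 : ℝ) < ε ^ 2 / 2)] with t ht x hx
  refine hball (mem_ball.2 ?_)
  have hx1 : ‖(x : E)‖ = 1 := mem_sphere_zero_iff_norm.1 x.2
  have hq1 : ‖q‖ = 1 := mem_sphere_zero_iff_norm.1 hq
  have hxq : ‖(x : E) - q‖ ^ 2 = 2 * (1 - ⟪q, (x : E)⟫) := by
    rw [norm_sub_sq_real, hx1, hq1, real_inner_comm]
    ring
  have hcap : 1 - ⟪q, (x : E)⟫ ≤ t := hx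
  rw [Subtype.dist_eq, dist_eq_norm]
  nlinarith [norm_nonneg ((x : E) - q), ht.2]

end SphereCap

lemma measureReal_unitBall_pos (n : ℕ) : 0 < volume.real (ball (0 : Euc n) 1) :=
  ENNReal.toReal_pos (measure_ball_pos _ _ one_pos).ne' measure_ball_lt_top.ne

lemma toSphere_real_sphereCap_mem_Icc {n : ℕ} {q : Euc (n + 1)} (hq : ‖q‖ = 1) {t : ℝ}
    (ht0 : 0 < t) (ht1 : t < 1) :
    volume.toSphere.real (sphereCap q t) ∈
      Icc (volume.real (ball (0 : Euc n) 1) * (t * (2 - t)) ^ ((n : ℝ) / 2) * (1 - t))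
        (volume.real (ball (0 : Euc n) 1) * (t * (2 - t)) ^ ((n : ℝ) / 2) / (1 - t) ^ n) := by
  set ω := volume.real (ball (0 : Euc n) 1)
  set r := 1 - t
  have hr : 0 < r := by linarith
  have htt : 0 ≤ t * (2 - t) := by nlinarith
  set c := √(t * (2 - t)) / r
  have hrc : (1 + c ^ 2) * r ^ 2 = 1 := by
    rw [div_pow, Real.sq_sqrt htt]
    field_simp
    ring
  have hcn : c ^ n = (t * (2 - t)) ^ ((n : ℝ) / 2) / r ^ n := by
    rw [div_pow, Real.sqrt_eq_rpow, ← rpow_natCast, ← rpow_mul htt]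
    ring_nf
  have hcone : volume.toSphere.real (sphereCap q t) =
      (n + 1) * volume.real {y : Euc (n + 1) | 0 < ‖y‖ ∧ ‖y‖ < 1 ∧ r * ‖y‖ ≤ ⟪q, y⟫} := by
    rw [measureReal_def, Measure.toSphere_apply' _ (measurableSet_sphereCap q t),
      Ioo_smul_sphereCap, finrank_euclideanSpace_fin, ENNReal.toReal_mul, measureReal_def]
    norm_cast
  have hvol : ∀ a, 0 ≤ a → volume.real {y : Euc (n + 1) |
      0 < ⟪q, y⟫ ∧ ⟪q, y⟫ < a ∧ ‖y‖ ^ 2 ≤ (1 + c ^ 2) * ⟪q, y⟫ ^ 2} =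
        c ^ n * a ^ (n + 1) / (n + 1) * ω := fun a ha => by
    rw [measureReal_def, volume_axialCone hq ha (by positivity), ENNReal.toReal_mul,
      ENNReal.toReal_ofReal (by positivity)]
    rfl
  have hcone_fin : volume {y : Euc (n + 1) | 0 < ‖y‖ ∧ ‖y‖ < 1 ∧ r * ‖y‖ ≤ ⟪q, y⟫} ≠ ∞ :=
    ((measure_mono fun y hy => mem_ball_zero_iff.2 hy.2.1).trans_lt measure_ball_lt_top).ne
  have hlow := measureReal_mono (axialCone_subset_cone hq hr hrc) hcone_fin
  have hup := measureReal_mono (cone_subset_axialCone hq hr hrc)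
    (by rw [volume_axialCone hq zero_le_one (by positivity)]; finiteness)
  rw [hvol r hr.le, hcn] at hlow
  rw [hvol 1 zero_le_one, hcn] at hup
  rw [hcone]
  have hn : (0 : ℝ) < n + 1 := by positivity
  constructor
  · calc ω * (t * (2 - t)) ^ ((n : ℝ) / 2) * r
        = (n + 1) * ((t * (2 - t)) ^ ((n : ℝ) / 2) / r ^ n * r ^ (n + 1) / (n + 1) * ω) := by
          field_simp
          ring
      _ ≤ _ := by gcongr
  · calc _ ≤ (n + 1) * ((t * (2 - t)) ^ ((n : ℝ) / 2) / r ^ n * 1 ^ (n + 1) / (n + 1) * ω) := by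
          gcongr
      _ = _ := by field_simp; ring

lemma isEquivalent_toSphere_real_sphereCap {n : ℕ} {q : Euc (n + 1)} (hq : ‖q‖ = 1) :
    (fun t => volume.toSphere.real (sphereCap q t)) ~[𝓝[>] 0]
      fun t => volume.real (ball (0 : Euc n) 1) * (2 * t) ^ ((n : ℝ) / 2) := by
  set ω := volume.real (ball (0 : Euc n) 1) with hω_def
  have hω : 0 < ω := measureReal_unitBall_pos n
  have hg : Tendsto (fun t : ℝ => ((2 - t) / 2) ^ ((n : ℝ) / 2)) (𝓝[>] 0) (𝓝 1) := by
    have : ContinuousAt (fun t : ℝ => ((2 - t) / 2) ^ ((n : ℝ) / 2)) 0 :=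
      ContinuousAt.rpow_const (by fun_prop) (Or.inr (by positivity))
    simpa using this.tendsto.mono_left nhdsWithin_le_nhds
  have h1t : Tendsto (fun t : ℝ => 1 - t) (𝓝[>] 0) (𝓝 1) := by
    simpa using ((continuous_sub_left (1 : ℝ)).tendsto 0).mono_left nhdsWithin_le_nhds
  have hlo := hg.mul h1t
  have hhi := hg.div (h1t.pow n) (by simp)
  rw [mul_one] at hlo
  rw [one_pow, div_one] at hhi
  have hbounds : ∀ᶠ t in 𝓝[>] 0,
      ((2 - t) / 2) ^ ((n : ℝ) / 2) * (1 - t) ≤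
        volume.toSphere.real (sphereCap q t) / (ω * (2 * t) ^ ((n : ℝ) / 2)) ∧
      volume.toSphere.real (sphereCap q t) / (ω * (2 * t) ^ ((n : ℝ) / 2)) ≤
        ((2 - t) / 2) ^ ((n : ℝ) / 2) / (1 - t) ^ n := by
    filter_upwards [Ioo_mem_nhdsGT one_pos] with t ⟨ht0, ht1⟩
    obtain ⟨hσlow, hσup⟩ := toSphere_real_sphereCap_mem_Icc hq ht0 ht1
    have hsplit : (t * (2 - t)) ^ ((n : ℝ) / 2) =
        (2 * t) ^ ((n : ℝ) / 2) * ((2 - t) / 2) ^ ((n : ℝ) / 2) := by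
      rw [← mul_rpow (by linarith) (by linarith)]
      ring_nf
    have hpos : 0 < ω * (2 * t) ^ ((n : ℝ) / 2) := by positivity
    rw [le_div_iff₀ hpos, div_le_iff₀ hpos]
    rw [← hω_def, hsplit] at hσlow hσup
    exact ⟨by linarith, hσup.trans_eq (by ring)⟩
  exact isEquivalent_of_tendsto_one (tendsto_of_tendsto_of_tendsto_of_le_of_le' hlo hhi
    (hbounds.mono fun _ h => h.1) (hbounds.mono fun _ h => h.2))

lemma inv_alpha_succ (n : ℕ) : (alpha (n + 1))⁻¹ = n / 2 := by
  simp [alpha]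

lemma Cq_succ {n : ℕ} (hn : n ≠ 0) (ρ : Euc (n + 1) → ℝ) (q : Euc (n + 1)) :
    Cq (n + 1) ρ q = 2 ^ ((n : ℝ) / 2) * ρ q * volume.real (ball (0 : Euc n) 1) := by
  rw [Cq, one_div, inv_alpha_succ, Nat.add_sub_cancel, sphereArea, ← measureReal_def,
    Measure.toSphere_real_apply_univ, finrank_euclideanSpace_fin]
  push_cast
  rw [add_sub_cancel_right]
  field_simp

lemma tokenLaw_setOf_le {n : ℕ} (q : Euc (n + 1)) {ρ : Euc (n + 1) → ℝ} (hρ : Measurable ρ)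
    (t : ℝ) :
    tokenLaw (n + 1) ρ {y | 1 - ⟪q, y⟫ ≤ t} =
      ∫⁻ x in sphereCap q t, ENNReal.ofReal (ρ x) ∂volume.toSphere := by
  have hmeas : MeasurableSet {y : Euc (n + 1) | 1 - ⟪q, y⟫ ≤ t} :=
    measurableSet_le (by fun_prop) measurable_const
  rw [tokenLaw, withDensity_apply _ hmeas, surfaceMeasure,
    setLIntegral_map hmeas hρ.ennreal_ofReal measurable_subtype_coe]
  rfl

lemma isEquivalent_tokenLaw_setOf_le {n : ℕ} (hn : n ≠ 0) {q : Euc (n + 1)} (hq : ‖q‖ = 1)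
    {ρ : Euc (n + 1) → ℝ} (hρ : Continuous ρ) (hρq : 0 < ρ q) :
    (fun t => (tokenLaw (n + 1) ρ {y | 1 - ⟪q, y⟫ ≤ t}).toReal) ~[𝓝[>] 0]
      fun t => Cq (n + 1) ρ q * t ^ (alpha (n + 1))⁻¹ := by
  have hq' : q ∈ sphere (0 : Euc (n + 1)) 1 := mem_sphere_zero_iff_norm.2 hq
  have hdensity := isEquivalent_setLIntegral_ofReal (μ := volume.toSphere)
    (hρ.comp continuous_subtype_val).continuousAt (x₀ := ⟨q, hq'⟩) hρq
    (tendsto_sphereCap_smallSets hq') (measurableSet_sphereCap q) fun _ => measure_ne_top _ _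
  have harea :=
    (IsEquivalent.refl (u := fun _ => ρ q)).mul (isEquivalent_toSphere_real_sphereCap hq)
  refine ((hdensity.trans harea).congr_left ?_).congr_right ?_
  · exact .of_forall fun t => congrArg ENNReal.toReal (tokenLaw_setOf_le q hρ.measurable t).symm
  · filter_upwards [self_mem_nhdsWithin] with t (ht : 0 < t)
    rw [Pi.mul_apply, Cq_succ hn, inv_alpha_succ, mul_rpow zero_le_two ht.le]
    ring

theorem quantile_asymptotics_dtq_general
    {d : ℕ} (hd : 2 ≤ d) {q : Euc d} (hq : ‖q‖ = 1)
    {ρ : Euc d → ℝ} (hρC2 : ContDiff ℝ 2 ρ) (hρq : 0 < ρ q)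
    (P : Measure Ω) [IsProbabilityMeasure P]
    {x₁ : Ω → Euc d} (hmeas : Measurable x₁)
    (hlaw : Measure.map x₁ P = tokenLaw d ρ) :
    Tendsto
      (fun u : ℝ =>
        sInf {t : ℝ | 0 ≤ t ∧ u ≤ (P {ω | 1 - ⟪q, x₁ ω⟫ ≤ t}).toReal} /
          (u / Cq d ρ q) ^ alpha d)
      (𝓝[>] 0) (𝓝 1) := by
  obtain ⟨n, rfl⟩ : ∃ n, d = n + 1 := ⟨d - 1, by omega⟩
  have hn : n ≠ 0 := by omega
  have hcdf : (fun t => (P {ω | 1 - ⟪q, x₁ ω⟫ ≤ t}).toReal) =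
      fun t => (tokenLaw (n + 1) ρ {y | 1 - ⟪q, y⟫ ≤ t}).toReal := by
    ext t
    rw [← hlaw, Measure.map_apply hmeas (measurableSet_le (by fun_prop) measurable_const)]
    rfl
  have hmono : Monotone fun t => (P {ω | 1 - ⟪q, x₁ ω⟫ ≤ t}).toReal := fun a b hab =>
    ENNReal.toReal_mono (measure_ne_top _ _) (measure_mono fun ω h => le_trans h hab)
  have hα : 0 < alpha (n + 1) := by
    rw [← inv_pos, inv_alpha_succ]
    positivity
  have hC : 0 < Cq (n + 1) ρ q := by
    rw [Cq_succ hn]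
    have := measureReal_unitBall_pos n
    positivity
  have hquantile := isEquivalent_lowerQuantile hmono hα hC
    (hcdf ▸ isEquivalent_tokenLaw_setOf_le hn hq hρC2.continuous hρq)
  refine (isEquivalent_iff_tendsto_one ?_).1 hquantile
  filter_upwards [self_mem_nhdsWithin] with u (hu : 0 < u)
  positivity

/-- **Quantile asymptotics for the distance-to-query.** With
`F⁻¹(u) = inf {t ≥ 0 : F(t) ≥ u}`, one has `F⁻¹(u) / (u/C(q))^α → 1` as `u → 0⁺`. -/
theorem quantile_asymptotics_dtq
    {d : ℕ} (hd : 2 ≤ d) {q : Euc d} (hq : ‖q‖ = 1)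
    {ρ : Euc d → ℝ} (hρC2 : ContDiff ℝ 2 ρ) (hρnn : ∀ y, 0 ≤ ρ y) (hρq : 0 < ρ q)
    (P : Measure Ω) [IsProbabilityMeasure P]
    {x₁ : Ω → Euc d} (hmeas : Measurable x₁) (hsph : ∀ ω, ‖x₁ ω‖ = 1)
    (hlaw : Measure.map x₁ P = tokenLaw d ρ) :
    Tendsto
      (fun u : ℝ =>
        sInf {t : ℝ | 0 ≤ t ∧ u ≤ (P {ω | 1 - ⟪q, x₁ ω⟫ ≤ t}).toReal} /
          (u / Cq d ρ q) ^ alpha d)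
      (𝓝[>] 0) (𝓝 1) :=
  quantile_asymptotics_dtq_general hd hq hρC2 hρq P hmeas hlaw

end AttnScaling
end
end
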